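/- arXiv:1808.08477 — 6 statements merged into one kernel-verified Lean document; each statement's English description precedes it below -/
import Mathlib

section
/- If an integer vector x is majorized by an integer vector y, then x is decreasingly smaller than or value-equivalent to y, and x is increasingly larger than or value-equivalent to y. -/
open Finset

/-- `x` rearranged in increasing order. -/
noncomputable def sortAsc {n : ℕ} (x : Fin n → ℤ) : Fin n → ℤ :=
  fun i => x (Tuple.sort x i)

/-- `x` rearranged in decreasing order (the vector `x↓`). -/
noncomputable def sortDesc {n : ℕ} (x : Fin n → ℤ) : Fin n → ℤ :=
  fun i => sortAsc x i.rev

/-- `x̄(k)`: the sum of the `k` largest components of `x`. -/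
noncomputable def psum {n : ℕ} (x : Fin n → ℤ) (k : ℕ) : ℤ :=
  ∑ i : Fin n, if (i : ℕ) < k then sortDesc x i else 0

/-- `x ≺ y`: `x` is majorized by `y`. -/
def Majorize {n : ℕ} (x y : Fin n → ℤ) : Prop :=
  (∀ k : ℕ, k < n → psum x k ≤ psum y k) ∧ psum x n = psum y n

/-- `x` and `y` are value-equivalent: `x↓ = y↓`. -/
def ValueEquiv {n : ℕ} (x y : Fin n → ℤ) : Prop :=
  sortDesc x = sortDesc y

/-- `x ≤_dec y`: `x` is decreasingly smaller than or value-equivalent to `y`. -/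
def DecLE {n : ℕ} (x y : Fin n → ℤ) : Prop :=
  ValueEquiv x y ∨
    ∃ j : Fin n, (∀ i : Fin n, i < j → sortDesc x i = sortDesc y i) ∧
      sortDesc x j < sortDesc y j

/-- `x <_dec y`: `x` is decreasingly smaller than `y`. -/
def DecLT {n : ℕ} (x y : Fin n → ℤ) : Prop :=
  ∃ j : Fin n, (∀ i : Fin n, i < j → sortDesc x i = sortDesc y i) ∧
    sortDesc x j < sortDesc y j

/-- `x ≥_inc y`: `x` is increasingly larger than or value-equivalent to `y`. -/
def IncGE {n : ℕ} (x y : Fin n → ℤ) : Prop :=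
  ValueEquiv x y ∨
    ∃ j : Fin n, (∀ i : Fin n, i < j → sortAsc x i = sortAsc y i) ∧
      sortAsc x j > sortAsc y j

/-- `x` is a least majorized element of `D`. -/
def LeastMajorized {n : ℕ} (D : Set (Fin n → ℤ)) (x : Fin n → ℤ) : Prop :=
  x ∈ D ∧ ∀ y ∈ D, Majorize x y

/-- `x` is a decreasingly minimal (dec-min) element of `D`. -/
def DecMin {n : ℕ} (D : Set (Fin n → ℤ)) (x : Fin n → ℤ) : Prop :=
  x ∈ D ∧ ∀ y ∈ D, DecLE x y

/-- `x` is an increasingly maximal (inc-max) element of `D`. -/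
def IncMax {n : ℕ} (D : Set (Fin n → ℤ)) (x : Fin n → ℤ) : Prop :=
  x ∈ D ∧ ∀ y ∈ D, IncGE x y

lemma psum_succ' {n : ℕ} (x : Fin n → ℤ) (k : ℕ) (hk : k < n) :
    psum x (k + 1) = psum x k + sortDesc x ⟨k, hk⟩ := by
  unfold psum
  have hpt : ∀ i : Fin n, (if (i : ℕ) < k + 1 then sortDesc x i else 0)
      = (if (i : ℕ) < k then sortDesc x i else 0)
        + (if i = ⟨k, hk⟩ then sortDesc x i else 0) := by
    intro i
    by_cases h1 : (i : ℕ) < k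
    · have h2 : (i : ℕ) < k + 1 := by omega
      have h3 : i ≠ ⟨k, hk⟩ := by
        intro he; rw [he] at h1; simp at h1
      simp [h1, h2, h3]
    · by_cases h2 : (i : ℕ) = k
      · have h3 : i = ⟨k, hk⟩ := Fin.ext h2
        simp [h1, h2, h3]
      · have h3 : ¬ ((i : ℕ) < k + 1) := by omega
        have h4 : i ≠ ⟨k, hk⟩ := by
          intro he; rw [he] at h2; simp at h2
        simp [h1, h3, h4]
  rw [Finset.sum_congr rfl (fun i _ => hpt i), Finset.sum_add_distrib,
    Finset.sum_ite_eq' Finset.univ ⟨k, hk⟩ (fun i => sortDesc x i)]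
  simp

lemma psum_total {n : ℕ} (x : Fin n → ℤ) :
    psum x n = ∑ i : Fin n, sortDesc x i := by
  unfold psum
  exact Finset.sum_congr rfl (fun i _ => by simp [i.isLt])

lemma psum_split {n : ℕ} (x : Fin n → ℤ) (k : ℕ) :
    (∑ i : Fin n, sortDesc x i)
    = psum x k + ∑ i : Fin n, (if (i : ℕ) < k then 0 else sortDesc x i) := by
  unfold psum
  rw [← Finset.sum_add_distrib]
  refine Finset.sum_congr rfl (fun i _ => ?_)
  by_cases hi : (i : ℕ) < k <;> simp [hi]

theorem majorize_imp_decLE_incGE {n : ℕ} (x y : Fin n → ℤ) (h : Majorize x y) :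
    DecLE x y ∧ IncGE x y := by
  by_cases hve : ValueEquiv x y
  · constructor
    · exact Or.inl hve
    · exact Or.inl hve
  -- the set of indices where sortDesc differ
  have hS : (Finset.univ.filter (fun i : Fin n => sortDesc x i ≠ sortDesc y i)).Nonempty := by
    by_contra hc
    apply hve
    funext i
    by_contra hne
    exact hc ⟨i, Finset.mem_filter.mpr ⟨Finset.mem_univ i, hne⟩⟩
  set S := Finset.univ.filter (fun i : Fin n => sortDesc x i ≠ sortDesc y i) with hSdef
  have hmem : ∀ i : Fin n, i ∈ S ↔ sortDesc x i ≠ sortDesc y i := by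
    intro i; simp [hSdef]
  constructor
  · -- DecLE : use minimal differing index
    right
    set j := S.min' hS with hj
    have hjS : j ∈ S := S.min'_mem hS
    have hjne : sortDesc x j ≠ sortDesc y j := (hmem j).mp hjS
    have hlt : ∀ i : Fin n, i < j → sortDesc x i = sortDesc y i := by
      intro i hi
      by_contra hne
      exact absurd (S.min'_le i ((hmem i).mpr hne)) (not_le.mpr hi)
    refine ⟨j, hlt, ?_⟩
    -- psum x j = psum y j
    have hpj : psum x (j : ℕ) = psum y (j : ℕ) := by
      unfold psum
      refine Finset.sum_congr rfl (fun i _ => ?_)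
      by_cases hi : (i : ℕ) < (j : ℕ)
      · simp [hi, hlt i hi]
      · simp [hi]
    have hps : psum x ((j : ℕ) + 1) ≤ psum y ((j : ℕ) + 1) := by
      rcases lt_or_eq_of_le (Nat.succ_le_of_lt j.isLt) with hc | hc
      · exact h.1 _ hc
      · rw [show (j : ℕ) + 1 = n from hc]; exact le_of_eq h.2
    rw [psum_succ' x _ j.isLt, psum_succ' y _ j.isLt, hpj] at hps
    simp only [Fin.eta] at hps
    exact lt_of_le_of_ne (by linarith) hjne
  · -- IncGE : use maximal differing index
    right
    set j := S.max' hS with hj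
    have hjS : j ∈ S := S.max'_mem hS
    have hjne : sortDesc x j ≠ sortDesc y j := (hmem j).mp hjS
    have hgt : ∀ i : Fin n, j < i → sortDesc x i = sortDesc y i := by
      intro i hi
      by_contra hne
      exact absurd (S.le_max' i ((hmem i).mpr hne)) (not_le.mpr hi)
    have htot : (∑ i : Fin n, sortDesc x i) = ∑ i : Fin n, sortDesc y i := by
      rw [← psum_total, ← psum_total]; exact h.2
    have hsuffix : (∑ i : Fin n, (if (i : ℕ) < (j : ℕ) + 1 then 0 else sortDesc x i))
        = ∑ i : Fin n, (if (i : ℕ) < (j : ℕ) + 1 then 0 else sortDesc y i) := by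
      refine Finset.sum_congr rfl (fun i _ => ?_)
      by_cases hi : (i : ℕ) < (j : ℕ) + 1
      · simp [hi]
      · have : j < i := by
          rw [Fin.lt_def]; omega
        simp [hi, hgt i this]
    have hpj1 : psum x ((j : ℕ) + 1) = psum y ((j : ℕ) + 1) := by
      have h1 := psum_split x ((j : ℕ) + 1)
      have h2 := psum_split y ((j : ℕ) + 1)
      rw [htot] at h1
      rw [h1, hsuffix] at h2
      linarith
    have hpj : psum x (j : ℕ) ≤ psum y (j : ℕ) := h.1 _ j.isLt
    have hge : sortDesc y j ≤ sortDesc x j := by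
      have hx := psum_succ' x _ j.isLt
      have hy := psum_succ' y _ j.isLt
      simp only [Fin.eta] at hx hy
      rw [hx, hy] at hpj1
      linarith
    refine ⟨j.rev, ?_, ?_⟩
    · intro i hi
      have hji : j < i.rev := by
        have h2 : i.rev.rev < j.rev := by rw [Fin.rev_rev]; exact hi
        exact Fin.rev_lt_rev.mp h2
      have heq := hgt i.rev hji
      simpa [sortDesc, Fin.rev_rev] using heq
    · have : sortDesc y j < sortDesc x j := lt_of_le_of_ne hge (Ne.symm hjne)
      simpa [sortDesc] using this
end

section
/- Let |S| = n ≥ 2 and let φ: ℤ → ℝ be a positive N-increasing function with N = n, i.e., φ(k+1) ≥ n·φ(k) > 0 for all k ∈ ℤ. Define Φ(x) = Σ_{s∈S} φ(x(s)). Then for x, y ∈ ℤ^S, x is decreasingly smaller than y (x <_dec y) if and only if Φ(x) < Φ(y). -/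
open Finset

lemma sum_phi_sortDesc {n : ℕ} (x : Fin n → ℤ) (φ : ℤ → ℝ) :
    ∑ i : Fin n, φ (sortDesc x i) = ∑ s : Fin n, φ (x s) := by
  have := Equiv.sum_comp ((Fin.revPerm).trans (Tuple.sort x)) (fun s => φ (x s))
  simpa [sortDesc, sortAsc, Function.comp] using this

lemma antitone_sortDesc {n : ℕ} (x : Fin n → ℤ) : Antitone (sortDesc x) := by
  intro i j hij
  have h := Tuple.monotone_sort x (Fin.rev_le_rev.mpr hij)
  simpa [sortDesc, sortAsc] using h

lemma decLT_trichotomy {n : ℕ} (x y : Fin n → ℤ) :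
    ValueEquiv x y ∨ DecLT x y ∨ DecLT y x := by
  by_cases h : sortDesc x = sortDesc y
  · exact Or.inl h
  · obtain ⟨i0, hi0⟩ := Function.ne_iff.mp h
    obtain ⟨j, hj, hmin⟩ := Finset.exists_min_image
      (Finset.univ.filter fun i => sortDesc x i ≠ sortDesc y i) id
      ⟨i0, by simpa using hi0⟩
    have hj' : sortDesc x j ≠ sortDesc y j := by simpa using hj
    have hpre : ∀ i : Fin n, i < j → sortDesc x i = sortDesc y i := by
      intro i hi
      by_contra hne
      exact absurd (hmin i (by simpa using hne)) (not_le.mpr hi)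
    rcases lt_or_gt_of_ne hj' with hlt | hgt
    · exact Or.inr (Or.inl ⟨j, hpre, hlt⟩)
    · exact Or.inr (Or.inr ⟨j, fun i hi => (hpre i hi).symm, hgt⟩)

lemma key_strict {n : ℕ} (hn : 2 ≤ n) (φ : ℤ → ℝ)
    (hφ : ∀ k : ℤ, (n : ℝ) * φ k ≤ φ (k + 1) ∧ 0 < φ k)
    (x y : Fin n → ℤ) (h : DecLT x y) :
    ∑ i : Fin n, φ (sortDesc x i) < ∑ i : Fin n, φ (sortDesc y i) := by
  obtain ⟨j, hpre, hj⟩ := h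
  have hmono : Monotone φ := by
    apply monotone_int_of_le_succ
    intro k
    refine le_trans ?_ (hφ k).1
    have h1 : (1 : ℝ) ≤ (n : ℝ) := by
      have : (1:ℕ) ≤ n := by omega
      exact_mod_cast this
    nlinarith [(hφ k).2]
  set c : ℤ := sortDesc y j - 1 with hc
  have hcy : (n : ℝ) * φ c ≤ φ (sortDesc y j) := by
    have := (hφ c).1
    simpa [hc] using this
  have hxc : sortDesc x j ≤ c := by rw [hc]; omega
  set t : Finset (Fin n) := Finset.univ.filter (fun i => ¬ i < j) with ht
  have hsplit : ∀ z : Fin n → ℤ,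
      ∑ i : Fin n, φ (sortDesc z i) =
      (∑ i ∈ Finset.univ.filter (fun i => i < j), φ (sortDesc z i)) +
      ∑ i ∈ t, φ (sortDesc z i) := by
    intro z
    rw [ht, Finset.sum_filter_add_sum_filter_not]
  rw [hsplit x, hsplit y]
  have hprefix : (∑ i ∈ Finset.univ.filter (fun i => i < j), φ (sortDesc x i)) =
      ∑ i ∈ Finset.univ.filter (fun i => i < j), φ (sortDesc y i) := by
    apply Finset.sum_congr rfl
    intro i hi
    rw [hpre i (by simpa using hi)]
  rw [hprefix]
  have htail : ∀ i ∈ t, φ (sortDesc x i) ≤ φ c := by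
    intro i hi
    have hji : j ≤ i := by
      simp only [ht, Finset.mem_filter] at hi
      exact le_of_not_gt hi.2
    exact hmono ((antitone_sortDesc x hji).trans hxc)
  have htx : ∑ i ∈ t, φ (sortDesc x i) ≤ (t.card : ℝ) * φ c := by
    calc ∑ i ∈ t, φ (sortDesc x i) ≤ ∑ _i ∈ t, φ c := Finset.sum_le_sum htail
    _ = (t.card : ℝ) * φ c := by rw [Finset.sum_const, nsmul_eq_mul]
  have hjt : j ∈ t := by simp [ht]
  have hty : φ (sortDesc y j) ≤ ∑ i ∈ t, φ (sortDesc y i) :=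
    Finset.single_le_sum (fun i _ => (hφ (sortDesc y i)).2.le) hjt
  have hφc : 0 < φ c := (hφ c).2
  have hfin : ∑ i ∈ t, φ (sortDesc x i) < ∑ i ∈ t, φ (sortDesc y i) := by
    rcases Nat.eq_zero_or_pos j.val with hj0 | hj0
    · -- j = 0 : card t ≤ n, and tail_y strictly exceeds φ (y↓ j)
      have hcard : (t.card : ℝ) ≤ (n : ℝ) := by
        have : t.card ≤ Finset.univ.card := Finset.card_filter_le _ _
        simp only [Finset.card_univ, Fintype.card_fin] at this
        exact_mod_cast this
      have h1 : (t.card : ℝ) * φ c ≤ (n : ℝ) * φ c :=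
        mul_le_mul_of_nonneg_right hcard hφc.le
      have hn1 : (1:ℕ) < n := by omega
      have hi1t : (⟨1, hn1⟩ : Fin n) ∈ t := by
        simp only [ht, Finset.mem_filter, Finset.mem_univ, true_and, not_lt]
        exact Fin.le_def.mpr (by simp only [Fin.val_mk]; omega)
      have hi1j : (⟨1, hn1⟩ : Fin n) ≠ j := by
        intro hEq
        have : (1:ℕ) = j.val := congrArg Fin.val hEq
        omega
      have hstrict : φ (sortDesc y j) < ∑ i ∈ t, φ (sortDesc y i) := by
        rw [← Finset.sum_erase_add t _ hjt]
        have hpos : 0 < ∑ i ∈ t.erase j, φ (sortDesc y i) := by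
          apply Finset.sum_pos (fun i _ => (hφ (sortDesc y i)).2)
          exact ⟨⟨1, hn1⟩, Finset.mem_erase.mpr ⟨hi1j, hi1t⟩⟩
        linarith
      linarith
    · -- j > 0 : card t < n
      have h0t : (⟨0, by omega⟩ : Fin n) ∉ t := by
        simp only [ht, Finset.mem_filter, Finset.mem_univ, true_and, not_not]
        exact Fin.lt_def.mpr (by simp only [Fin.val_mk]; exact hj0)
      have hsub : t ⊂ Finset.univ :=
        Finset.ssubset_univ_iff.mpr (fun hEq => h0t (hEq ▸ Finset.mem_univ _))
      have hcard : t.card < n := by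
        have := Finset.card_lt_card hsub
        simpa using this
      have h1 : (t.card : ℝ) * φ c < (n : ℝ) * φ c := by
        apply mul_lt_mul_of_pos_right _ hφc
        exact_mod_cast hcard
      linarith
  linarith

theorem decLT_iff_sum_lt {n : ℕ} (hn : 2 ≤ n) (φ : ℤ → ℝ)
    (hφ : ∀ k : ℤ, (n : ℝ) * φ k ≤ φ (k + 1) ∧ 0 < φ k)
    (x y : Fin n → ℤ) :
    DecLT x y ↔ ∑ s : Fin n, φ (x s) < ∑ s : Fin n, φ (y s) := by
  constructor
  · intro h
    rw [← sum_phi_sortDesc x φ, ← sum_phi_sortDesc y φ]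
    exact key_strict hn φ hφ x y h
  · intro h
    rcases decLT_trichotomy x y with hve | hlt | hgt
    · exfalso
      rw [← sum_phi_sortDesc x φ, ← sum_phi_sortDesc y φ, hve] at h
      exact lt_irrefl _ h
    · exact hlt
    · exfalso
      have := key_strict hn φ hφ y x hgt
      rw [sum_phi_sortDesc x φ, sum_phi_sortDesc y φ] at this
      linarith
end

section
/- Let D ⊆ ℤ^S be an arbitrary nonempty set with |S| ≥ 2 and let φ: ℤ → ℝ be |S|-increasing. Then an element m ∈ D is decreasingly minimal in D if and only if m minimizes Φ(x) = Σ_{s∈S} φ(x(s)) over D. -/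
open Finset

/-! The weight `φ(k+1) ≥ |S|·φ(k)` makes one unit in a single component outweigh any change
in all the smaller components. Hence, for vectors sorted decreasingly, `Σ φ` is strictly
monotone in the lexicographic order, and since `Σ φ(x s)` only depends on `x↓`, comparing
`Σ φ` is the same as comparing decreasingly. -/

lemma monotone_of_mul_le_apply_succ {φ : ℤ → ℝ} {N : ℕ} (hN : 1 ≤ N)
    (hφ : ∀ k, (N : ℝ) * φ k ≤ φ (k + 1)) (hpos : ∀ k, 0 < φ k) : Monotone φ :=
  monotone_int_of_le_succ fun k =>
    le_trans (le_mul_of_one_le_left (hpos k).le (by exact_mod_cast hN)) (hφ k)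

theorem sum_lt_sum_of_antitone_of_toLex_lt {ι : Type*} [Fintype ι] [LinearOrder ι] {φ : ℤ → ℝ}
    (hι : 2 ≤ Fintype.card ι) (hφ : ∀ k, (Fintype.card ι : ℝ) * φ k ≤ φ (k + 1))
    (hpos : ∀ k, 0 < φ k) {a b : ι → ℤ} (ha : Antitone a) (hab : toLex a < toLex b) :
    ∑ i, φ (a i) < ∑ i, φ (b i) := by
  obtain ⟨j, hprefix, hj⟩ : ∃ j, (∀ i < j, a i = b i) ∧ a j < b j := hab
  have hmono := monotone_of_mul_le_apply_succ (by omega) hφ hpos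
  rw [← sum_filter_add_sum_filter_not univ (· < j) (fun i => φ (a i)),
    ← sum_filter_add_sum_filter_not univ (· < j) (fun i => φ (b i))]
  refine add_lt_add_of_le_of_lt (sum_congr rfl fun i hi => ?_).le ?_
  · rw [hprefix i (mem_filter.1 hi).2]
  set S := univ.filter (fun i => ¬ i < j)
  have hjS : j ∈ S := by simp [S]
  have ha_tail : ∑ i ∈ S, φ (a i) ≤ #S * φ (a j) := by
    rw [← nsmul_eq_mul]
    exact sum_le_card_nsmul S _ _ fun i hi => hmono (ha (not_lt.1 (mem_filter.1 hi).2))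
  have hb_tail : φ (b j) + ∑ i ∈ S.erase j, φ (b i) = ∑ i ∈ S, φ (b i) :=
    add_sum_erase S (fun i => φ (b i)) hjS
  have hjump : (Fintype.card ι : ℝ) * φ (a j) ≤ φ (b j) := (hφ _).trans (hmono hj)
  have hcard : (#S : ℝ) ≤ Fintype.card ι := by exact_mod_cast card_le_univ S
  have hφ_pos := hpos (a j)
  -- Either `j` is the only index of the tail, so the jump gains a factor `2 ≤ |ι|`,
  -- or the tail has another index, whose `φ (b i)` is a positive surplus.
  rcases (S.erase j).eq_empty_or_nonempty with hS | hS
  · have hS1 : #S = 1 := by rw [← card_erase_add_one hjS, hS, card_empty]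
    have h2 : (2 : ℝ) ≤ Fintype.card ι := by exact_mod_cast hι
    rw [hS, sum_empty] at hb_tail
    rw [hS1, Nat.cast_one] at ha_tail
    nlinarith
  · have := sum_pos (fun i _ => hpos (b i)) hS
    nlinarith

lemma sum_comp_sortDesc {M : Type*} [AddCommMonoid M] {n : ℕ} (f : ℤ → M) (x : Fin n → ℤ) :
    ∑ i, f (sortDesc x i) = ∑ s, f (x s) :=
  Equiv.sum_comp (Fin.revPerm.trans (Tuple.sort x)) (fun s => f (x s))

lemma decLE_iff_toLex_le {n : ℕ} {x y : Fin n → ℤ} :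
    DecLE x y ↔ toLex (sortDesc x) ≤ toLex (sortDesc y) := by
  rw [le_iff_eq_or_lt, toLex_inj]
  rfl

theorem sum_le_sum_iff_decLE {n : ℕ} (hn : 2 ≤ n) {φ : ℤ → ℝ}
    (hφ : ∀ k, (n : ℝ) * φ k ≤ φ (k + 1)) (hpos : ∀ k, 0 < φ k) {x y : Fin n → ℤ} :
    ∑ s, φ (x s) ≤ ∑ s, φ (y s) ↔ DecLE x y := by
  rw [← Fintype.card_fin n] at hn hφ
  have hlt {a b : Fin n → ℤ} := sum_lt_sum_of_antitone_of_toLex_lt hn hφ hpos (a := a) (b := b)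
  rw [decLE_iff_toLex_le, ← sum_comp_sortDesc φ x, ← sum_comp_sortDesc φ y]
  constructor
  · exact fun h => not_lt.1 fun hyx => (hlt (antitone_sortDesc y) hyx).not_ge h
  · intro h
    rcases h.eq_or_lt with h | h
    · rw [toLex_inj.1 h]
    · exact (hlt (antitone_sortDesc x) h).le

theorem decMin_iff_min_sum_general {n : ℕ} (hn : 2 ≤ n) (φ : ℤ → ℝ)
    (hφ : ∀ k : ℤ, (n : ℝ) * φ k ≤ φ (k + 1) ∧ 0 < φ k)
    (D : Set (Fin n → ℤ)) (m : Fin n → ℤ) (hm : m ∈ D) :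
    DecMin D m ↔ ∀ y ∈ D, ∑ s : Fin n, φ (m s) ≤ ∑ s : Fin n, φ (y s) := by
  simp only [DecMin, sum_le_sum_iff_decLE hn (fun k => (hφ k).1) (fun k => (hφ k).2)]
  exact and_iff_right hm

theorem decMin_iff_min_sum {n : ℕ} (hn : 2 ≤ n) (φ : ℤ → ℝ)
    (hφ : ∀ k : ℤ, (n : ℝ) * φ k ≤ φ (k + 1) ∧ 0 < φ k)
    (D : Set (Fin n → ℤ)) (hD : D.Nonempty) (m : Fin n → ℤ) (hm : m ∈ D) :
    DecMin D m ↔ ∀ y ∈ D, ∑ s : Fin n, φ (m s) ≤ ∑ s : Fin n, φ (y s) :=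
  decMin_iff_min_sum_general hn φ hφ D m hm
end

section
/- Let integers a ≥ 1 and b ≥ 2, and define φ(k) = a·b^k for k ≥ 0 and φ(k) = +∞ for k < 0. Then for any integer ℓ ≥ 1, the conjugate ψ(ℓ) = sup{kℓ − φ(k) : k ∈ ℤ, k ≥ 0} equals ℓ·K − a·b^K where K = ⌈log_b(ℓ/(a(b−1)))⌉ when this K is nonnegative (and K = 0 otherwise). -/
theorem conjugate_of_exponential (a b : ℤ) (ha : 1 ≤ a) (hb : 2 ≤ b)
    (ℓ : ℤ) (hl : 1 ≤ ℓ) (K : ℤ)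
    (hK : K = max 0 ⌈Real.log ((ℓ : ℝ) / ((a : ℝ) * ((b : ℝ) - 1))) / Real.log (b : ℝ)⌉) :
    IsGreatest {v : ℤ | ∃ k : ℕ, v = (k : ℤ) * ℓ - a * b ^ k}
      (ℓ * K - a * b ^ K.toNat) := by
  set x : ℝ := Real.log ((ℓ : ℝ) / ((a : ℝ) * ((b : ℝ) - 1))) / Real.log (b : ℝ) with hx
  have hK0 : 0 ≤ K := by rw [hK]; exact le_max_left _ _
  set N : ℕ := K.toNat with hN
  have hNK : (N : ℤ) = K := Int.toNat_of_nonneg hK0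
  have hb0 : (0:ℤ) < b := by linarith
  have hc1 : 1 ≤ a * (b - 1) := by nlinarith
  have hbR : (1:ℝ) < (b:ℝ) := by exact_mod_cast (by linarith : (1:ℤ) < b)
  have hlogb : 0 < Real.log (b:ℝ) := Real.log_pos hbR
  have hcR : (0:ℝ) < (a:ℝ) * ((b:ℝ) - 1) := by
    have : (0:ℤ) < a * (b-1) := by linarith
    exact_mod_cast this
  have htpos : (0:ℝ) < (ℓ : ℝ) / ((a : ℝ) * ((b : ℝ) - 1)) := by
    apply div_pos _ hcR
    exact_mod_cast (by linarith : (0:ℤ) < ℓ)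
  -- Fact A : ℓ ≤ a*(b-1)*b^N
  have hA : ℓ ≤ a * (b - 1) * b ^ N := by
    have hxK : x ≤ (K : ℝ) := by
      calc x ≤ (⌈x⌉ : ℝ) := Int.le_ceil x
        _ ≤ (K : ℝ) := by exact_mod_cast (hK ▸ le_max_right _ _)
    have hlog : Real.log ((ℓ : ℝ) / ((a : ℝ) * ((b : ℝ) - 1))) ≤ (K : ℝ) * Real.log b := by
      rw [hx, div_le_iff₀ hlogb] at hxK
      exact hxK
    have hlog2 : Real.log ((ℓ : ℝ) / ((a : ℝ) * ((b : ℝ) - 1))) ≤ Real.log ((b:ℝ) ^ N) := by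
      rw [Real.log_pow]
      rw [← hNK] at hlog
      exact_mod_cast hlog
    have hle : (ℓ : ℝ) / ((a : ℝ) * ((b : ℝ) - 1)) ≤ (b:ℝ) ^ N := by
      have := (Real.log_le_log_iff htpos (by positivity)).mp hlog2
      exact this
    have : (ℓ:ℝ) ≤ (a:ℝ) * ((b:ℝ) - 1) * (b:ℝ) ^ N := by
      rw [div_le_iff₀ hcR] at hle
      linarith [hle]
    exact_mod_cast this
  -- Fact B : for j < N, a*(b-1)*b^j ≤ ℓ
  have hB : ∀ j : ℕ, j < N → a * (b - 1) * b ^ j ≤ ℓ := by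
    intro j hj
    have hN1 : 1 ≤ K := by omega
    have hKceil : K = ⌈x⌉ := by
      rw [hK]
      have : (1:ℤ) ≤ ⌈x⌉ := by
        by_contra h
        push_neg at h
        rw [hK] at hN1
        omega
      omega
    have hxlt : ((K : ℝ) - 1) < x := by
      have := Int.ceil_lt_add_one x
      rw [← hKceil] at this
      push_cast at this
      linarith
    have hlog : ((K:ℝ) - 1) * Real.log b < Real.log ((ℓ : ℝ) / ((a : ℝ) * ((b : ℝ) - 1))) := by
      rw [hx, lt_div_iff₀ hlogb] at hxlt
      exact hxlt
    have hlog2 : Real.log ((b:ℝ) ^ (N - 1)) < Real.log ((ℓ : ℝ) / ((a : ℝ) * ((b : ℝ) - 1))) := by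
      rw [Real.log_pow]
      have hcast : ((N - 1 : ℕ) : ℝ) = (K:ℝ) - 1 := by
        have : (1:ℕ) ≤ N := by omega
        push_cast [Nat.cast_sub this]
        have hNR : ((N:ℕ):ℝ) = ((K:ℤ):ℝ) := by exact_mod_cast hNK
        rw [hNR]
      rw [hcast]
      exact hlog
    have hlt : (b:ℝ) ^ (N-1) < (ℓ : ℝ) / ((a : ℝ) * ((b : ℝ) - 1)) :=
      (Real.log_lt_log_iff (by positivity) htpos).mp hlog2
    have hltZ : a * (b - 1) * b ^ (N-1) ≤ ℓ := by
      have : (a:ℝ) * ((b:ℝ) - 1) * (b:ℝ) ^ (N-1) < (ℓ:ℝ) := by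
        rw [lt_div_iff₀ hcR] at hlt
        linarith
      have : a * (b - 1) * b ^ (N-1) < ℓ := by exact_mod_cast this
      linarith
    calc a * (b - 1) * b ^ j ≤ a * (b - 1) * b ^ (N-1) := by
          apply mul_le_mul_of_nonneg_left
          · exact pow_le_pow_right₀ (by linarith) (by omega)
          · linarith
      _ ≤ ℓ := hltZ
  -- the discrete function
  have fstep : ∀ k : ℕ, ((k+1 : ℕ) : ℤ) * ℓ - a * b ^ (k+1) =
      ((k : ℕ) : ℤ) * ℓ - a * b ^ k + (ℓ - a * (b - 1) * b ^ k) := by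
    intro k
    push_cast
    ring
  constructor
  · exact ⟨N, by rw [hNK]; ring⟩
  · rintro v ⟨k, rfl⟩
    have goal_eq : ℓ * K - a * b ^ N = (N : ℤ) * ℓ - a * b ^ N := by rw [hNK]; ring
    rw [goal_eq]
    rcases le_or_gt k N with hkN | hNk
    · -- increasing up to N
      have key : ∀ m : ℕ, k ≤ m → m ≤ N →
          (k : ℤ) * ℓ - a * b ^ k ≤ (m : ℤ) * ℓ - a * b ^ m := by
        intro m hm
        induction m, hm using Nat.le_induction with
        | base => intro _; exact le_rfl
        | succ m hm ih =>
          intro hmN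
          have h1 := ih (by omega)
          have h2 : a * (b - 1) * b ^ m ≤ ℓ := hB m (by omega)
          rw [fstep m]
          linarith
      exact key N hkN le_rfl
    · -- decreasing after N
      have key : ∀ m : ℕ, N ≤ m →
          (m : ℤ) * ℓ - a * b ^ m ≤ (N : ℤ) * ℓ - a * b ^ N := by
        intro m hm
        induction m, hm using Nat.le_induction with
        | base => exact le_refl _
        | succ m hm ih =>
          have h2 : ℓ ≤ a * (b - 1) * b ^ m := by
            calc ℓ ≤ a * (b - 1) * b ^ N := hA
              _ ≤ a * (b - 1) * b ^ m := by
                apply mul_le_mul_of_nonneg_left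
                · exact pow_le_pow_right₀ (by linarith) hm
                · linarith
          rw [fstep m]
          linarith
      exact key k (by omega)
end

section
/- Let D = {(2, 0, 0, 0), (1, −1, 1, 1)} ⊆ ℤ⁴. Then (2, 0, 0, 0) is increasingly maximal in D and (1, −1, 1, 1) is decreasingly minimal in D, but D has no least majorized element. -/
open Finset

lemma sortAsc_eq {n : ℕ} (x : Fin n → ℤ) (σ : Equiv.Perm (Fin n))
    (h : Monotone (x ∘ σ)) : sortAsc x = x ∘ σ := by
  have := (Tuple.comp_sort_eq_comp_iff_monotone (f := x) (σ := σ)).mpr h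
  funext i
  exact (congrFun this i).symm

lemma sortAsc_a : sortAsc ![(2 : ℤ), 0, 0, 0] = ![0, 0, 0, 2] := by
  have h : Monotone (![(2 : ℤ), 0, 0, 0] ∘ finRotate 4) := by decide
  rw [sortAsc_eq _ _ h]
  funext i; fin_cases i <;> rfl

lemma sortAsc_b : sortAsc ![(1 : ℤ), -1, 1, 1] = ![-1, 1, 1, 1] := by
  have h : Monotone (![(1 : ℤ), -1, 1, 1] ∘ Equiv.swap 0 1) := by decide
  rw [sortAsc_eq _ _ h]
  funext i; fin_cases i <;> rfl

lemma sortDesc_a : sortDesc ![(2 : ℤ), 0, 0, 0] = ![2, 0, 0, 0] := by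
  funext i; unfold sortDesc; rw [sortAsc_a]; fin_cases i <;> rfl

lemma sortDesc_b : sortDesc ![(1 : ℤ), -1, 1, 1] = ![1, 1, 1, -1] := by
  funext i; unfold sortDesc; rw [sortAsc_b]; fin_cases i <;> rfl

theorem incMax_decMin_no_leastMajorized_example :
    IncMax ({![(2 : ℤ), 0, 0, 0], ![1, -1, 1, 1]} : Set (Fin 4 → ℤ)) ![(2 : ℤ), 0, 0, 0] ∧
    DecMin ({![(2 : ℤ), 0, 0, 0], ![1, -1, 1, 1]} : Set (Fin 4 → ℤ)) ![1, -1, 1, 1] ∧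
    ¬ ∃ z, LeastMajorized ({![(2 : ℤ), 0, 0, 0], ![1, -1, 1, 1]} : Set (Fin 4 → ℤ)) z := by
  refine ⟨⟨Or.inl rfl, ?_⟩, ⟨Or.inr rfl, ?_⟩, ?_⟩
  · rintro y (rfl | rfl)
    · exact Or.inl rfl
    · refine Or.inr ⟨0, fun i hi => absurd hi (by simp), ?_⟩
      rw [sortAsc_a, sortAsc_b]; norm_num
  · rintro y (rfl | rfl)
    · refine Or.inr ⟨0, fun i hi => absurd hi (by simp), ?_⟩
      rw [sortDesc_a, sortDesc_b]; norm_num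
    · exact Or.inl rfl
  · rintro ⟨z, hz, hmaj⟩
    have ha := hmaj _ (Or.inl rfl)
    have hb := hmaj _ (Or.inr rfl)
    have pa1 : psum ![(2 : ℤ), 0, 0, 0] 1 = 2 := by
      unfold psum; rw [sortDesc_a]; decide
    have pb1 : psum ![(1 : ℤ), -1, 1, 1] 1 = 1 := by
      unfold psum; rw [sortDesc_b]; decide
    have pa3 : psum ![(2 : ℤ), 0, 0, 0] 3 = 2 := by
      unfold psum; rw [sortDesc_a]; decide
    have pb3 : psum ![(1 : ℤ), -1, 1, 1] 3 = 3 := by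
      unfold psum; rw [sortDesc_b]; decide
    rcases hz with rfl | rfl
    · have := hb.1 1 (by norm_num)
      rw [pa1, pb1] at this; norm_num at this
    · have := ha.1 3 (by norm_num)
      rw [pa3, pb3] at this; norm_num at this
end

section
/- For any minimizer m̄ ∈ ℝ^S of the piecewise-linear function Φ̄(x) = Σ_{s∈S} φ̄(x(s)) over an integral base-polyhedron B, where φ̄ is the piecewise-linear extension of k ↦ k², there exists an integral point m ∈ B ∩ ℤ^S minimizing Σ_{s∈S} x(s)² over B ∩ ℤ^S such that ⌊m̄⌋ ≤ m ≤ ⌈m̄⌉ componentwise. -/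
/-!
On the unit cell `⌊m̄⌋ ≤ x ≤ ⌈m̄⌉` the function `Φ̄` is affine, with slope `2⌊m̄(s)⌋ + 1` in
coordinate `s`, and it agrees with `∑ x(s)²` at integral points. So it suffices to round `m̄`,
inside `B` and the cell, to an integral point without increasing a given linear cost. Tight
sets are closed under `∩` and `∪` by submodularity, so a smallest tight set meeting a
non-integral coordinate contains a second one (its sum is an integer), and no tight set separates
the two. Moving mass from the one of larger slope to the other until a coordinate becomes
integral or a new set becomes tight keeps the point in `B` and in the cell, does not increase the
cost, and decreases the number of non-integral coordinates plus the number of non-tight sets.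
-/

open Finset

/-- The piecewise-linear extension of `k ↦ k²`:
`φ̄(t) = (2k−1)|t| − k(k−1)` for `k−1 ≤ |t| ≤ k`, `k ∈ ℤ`. -/
noncomputable def phibar (t : ℝ) : ℝ :=
  (2 * (⌈|t|⌉ : ℝ) - 1) * |t| - (⌈|t|⌉ : ℝ) * ((⌈|t|⌉ : ℝ) - 1)

lemma phibar_neg (t : ℝ) : phibar (-t) = phibar t := by
  simp only [phibar, abs_neg]

lemma phibar_eq_of_le_of_le_add_one {n : ℤ} {t : ℝ} (hn : (n : ℝ) ≤ t) (ht : t ≤ n + 1) :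
    phibar t = (2 * n + 1) * t - n * (n + 1) := by
  wlog h0 : 0 ≤ n generalizing n t
  · have := this (n := -n - 1) (t := -t) (by push_cast; linarith) (by push_cast; linarith)
      (by omega)
    rw [phibar_neg] at this
    rw [this]; push_cast; ring
  have habs : |t| = t := abs_of_nonneg (le_trans (by exact_mod_cast h0) hn)
  rcases hn.eq_or_lt with rfl | hlt
  · simp only [phibar, habs, Int.ceil_intCast]; ring
  · have hceil : ⌈t⌉ = n + 1 :=
      Int.ceil_eq_iff.mpr ⟨by push_cast; linarith, by push_cast; linarith⟩
    simp only [phibar, habs, hceil]; push_cast; ring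

lemma phibar_intCast (k : ℤ) : phibar k = (k : ℝ) ^ 2 := by
  rw [phibar_eq_of_le_of_le_add_one le_rfl (by linarith)]; ring

lemma phibar_eq_of_floor_le_of_le_ceil {r t : ℝ} (h₁ : (⌊r⌋ : ℝ) ≤ t) (h₂ : t ≤ ⌈r⌉) :
    phibar t = (2 * ⌊r⌋ + 1) * t - ⌊r⌋ * (⌊r⌋ + 1) :=
  phibar_eq_of_le_of_le_add_one h₁ (h₂.trans (by exact_mod_cast Int.ceil_le_floor_add_one r))

section BasePolyhedron

variable {S : Type*}

def submodularPolyhedron (b : Finset S → WithTop ℤ) : Set (S → ℝ) :=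
  {x | ∀ Z : Finset S, ∀ m : ℤ, b Z = (m : WithTop ℤ) → ∑ s ∈ Z, x s ≤ (m : ℝ)}

def basePolyhedron [Fintype S] (b : Finset S → WithTop ℤ) (bS : ℤ) : Set (S → ℝ) :=
  {x | (∑ s, x s) = (bS : ℝ) ∧ x ∈ submodularPolyhedron b}

def IsTight (b : Finset S → WithTop ℤ) (x : S → ℝ) (Z : Finset S) : Prop :=
  ∃ k : ℤ, b Z = k ∧ ∑ s ∈ Z, x s = k

open scoped Classical in
noncomputable def looseSets [Fintype S] (b : Finset S → WithTop ℤ) (x : S → ℝ) :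
    Finset (Finset S) :=
  univ.filter fun Z => ∃ k : ℤ, b Z = k ∧ ∑ s ∈ Z, x s < k

open scoped Classical in
noncomputable def nonIntegralCoords [Fintype S] (x : S → ℝ) : Finset S :=
  univ.filter fun s => x s ∉ Set.range ((↑) : ℤ → ℝ)

variable {b : Finset S → WithTop ℤ} {x : S → ℝ}

lemma mem_looseSets [Fintype S] {Z : Finset S} :
    Z ∈ looseSets b x ↔ ∃ k : ℤ, b Z = k ∧ ∑ s ∈ Z, x s < k := by
  simp [looseSets]

lemma mem_nonIntegralCoords [Fintype S] {s : S} :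
    s ∈ nonIntegralCoords x ↔ x s ∉ Set.range ((↑) : ℤ → ℝ) := by
  simp [nonIntegralCoords]

lemma floor_lt_and_lt_ceil_of_mem_nonIntegralCoords [Fintype S] {s : S}
    (hs : s ∈ nonIntegralCoords x) : ⌊x s⌋ < x s ∧ x s < ⌈x s⌉ := by
  rw [mem_nonIntegralCoords] at hs
  exact ⟨Int.floor_lt_self_iff.mpr hs,
    (Int.le_ceil _).lt_of_ne fun h => hs ((Int.ceil_eq_self_iff_mem _).mp h.symm)⟩

lemma IsTight.inter_union [DecidableEq S] (hsub : ∀ X Y, b (X ∩ Y) + b (X ∪ Y) ≤ b X + b Y)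
    (hx : x ∈ submodularPolyhedron b) {Z W : Finset S} (hZ : IsTight b x Z) (hW : IsTight b x W) :
    IsTight b x (Z ∩ W) ∧ IsTight b x (Z ∪ W) := by
  obtain ⟨p, hp, hpx⟩ := hZ
  obtain ⟨q, hq, hqx⟩ := hW
  have hle := hsub Z W
  rw [hp, hq] at hle
  obtain ⟨hi, hu⟩ := WithTop.add_ne_top.mp (ne_top_of_le_ne_top (WithTop.coe_add p q ▸
    WithTop.coe_ne_top) hle)
  obtain ⟨i, hi⟩ := WithTop.ne_top_iff_exists.mp hi
  obtain ⟨u, hu⟩ := WithTop.ne_top_iff_exists.mp hu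
  rw [← hi, ← hu] at hle
  have hiu : (i + u : ℝ) ≤ p + q := by exact_mod_cast hle
  have hsum := sum_union_inter (s₁ := Z) (s₂ := W) (f := x)
  have hxi := hx _ _ hi.symm
  have hxu := hx _ _ hu.symm
  exact ⟨⟨i, hi.symm, by linarith⟩, ⟨u, hu.symm, by linarith⟩⟩

lemma mem_range_intCast_of_sum_mem [DecidableEq S] {T : Finset S} {u : S} (hu : u ∈ T)
    (hT : ∑ s ∈ T, x s ∈ Set.range ((↑) : ℤ → ℝ))
    (hint : ∀ s ∈ T.erase u, x s ∈ Set.range ((↑) : ℤ → ℝ)) :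
    x u ∈ Set.range ((↑) : ℤ → ℝ) := by
  have hxu : x u = ∑ s ∈ T, x s - ∑ s ∈ T.erase u, x s := by rw [← add_sum_erase T x hu]; ring
  rw [hxu]
  exact sub_mem (H := (Int.castAddHom ℝ).range) hT (sum_mem (S := (Int.castAddHom ℝ).range) hint)

lemma exists_inseparable_nonIntegralCoords [Fintype S] [DecidableEq S]
    (hsub : ∀ X Y, b (X ∩ Y) + b (X ∪ Y) ≤ b X + b Y) {bS : ℤ} (hbS : b univ = bS)
    (hx : x ∈ basePolyhedron b bS) (hN : (nonIntegralCoords x).Nonempty) :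
    ∃ p ∈ nonIntegralCoords x, ∃ q ∈ nonIntegralCoords x,
      p ≠ q ∧ ∀ Z, IsTight b x Z → (p ∈ Z ↔ q ∈ Z) := by
  classical
  set N := nonIntegralCoords x
  set F := univ.filter fun Z => IsTight b x Z ∧ (Z ∩ N).Nonempty
  obtain ⟨T, hTF, hTmin⟩ := exists_min_image F card
    ⟨univ, mem_filter.mpr ⟨mem_univ _, ⟨bS, hbS, hx.1⟩, by simpa using hN⟩⟩
  obtain ⟨-, hT, u, huT⟩ := mem_filter.mp hTF
  rw [mem_inter] at huT
  have hsubset : ∀ Z, IsTight b x Z → ∀ v ∈ N, v ∈ T → v ∈ Z → T ⊆ Z := by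
    intro Z hZ v hvN hvT hvZ
    have hZT : Z ∩ T ∈ F :=
      mem_filter.mpr ⟨mem_univ _, (hZ.inter_union hsub hx.2 hT).1, v, by simp [*]⟩
    have := eq_of_subset_of_card_le inter_subset_right (hTmin _ hZT)
    exact this ▸ inter_subset_left
  obtain ⟨w, hwT, hwu, hwN⟩ : ∃ w ∈ T, w ≠ u ∧ w ∈ N := by
    by_contra! h
    obtain ⟨k, hk, hkx⟩ := hT
    refine mem_nonIntegralCoords.mp huT.2 (mem_range_intCast_of_sum_mem huT.1 ⟨k, hkx.symm⟩ ?_)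
    intro s hs
    by_contra hsN
    exact h s (mem_of_mem_erase hs) (ne_of_mem_erase hs) (mem_nonIntegralCoords.mpr hsN)
  exact ⟨u, huT.2, w, hwN, hwu.symm, fun Z hZ =>
    ⟨fun h => hsubset Z hZ u huT.2 huT.1 h hwT, fun h => hsubset Z hZ w hwN hwT h huT.1⟩⟩

section Transfer

variable [DecidableEq S]

def transfer (x : S → ℝ) (p q : S) (α : ℝ) : S → ℝ := x + Pi.single p α - Pi.single q α

variable {p q : S} {α : ℝ}

lemma transfer_apply_left (hpq : p ≠ q) : transfer x p q α p = x p + α := by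
  simp [transfer, hpq]

lemma transfer_apply_right (hpq : p ≠ q) : transfer x p q α q = x q - α := by
  simp [transfer, hpq.symm]

lemma sum_transfer (Z : Finset S) :
    ∑ s ∈ Z, transfer x p q α s =
      ∑ s ∈ Z, x s + (if p ∈ Z then α else 0) - (if q ∈ Z then α else 0) := by
  simp only [transfer, Pi.add_apply, Pi.sub_apply, sum_add_distrib, sum_sub_distrib,
    sum_pi_single']

lemma sum_mul_transfer [Fintype S] (c : S → ℝ) :
    ∑ s, c s * transfer x p q α s = ∑ s, c s * x s + c p * α - c q * α := by
  simp [transfer, mul_add, mul_sub, sum_add_distrib, sum_sub_distrib, Pi.single_apply]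

lemma transfer_mem_basePolyhedron [Fintype S] {bS : ℤ} (hx : x ∈ basePolyhedron b bS)
    (hα : 0 ≤ α) (hslack : ∀ Z, ∀ k : ℤ, b Z = k → p ∈ Z → q ∉ Z → ∑ s ∈ Z, x s + α ≤ k) :
    transfer x p q α ∈ basePolyhedron b bS := by
  refine ⟨by simpa [sum_transfer] using hx.1, fun Z k hk => ?_⟩
  have := hx.2 Z k hk
  rw [sum_transfer]
  by_cases hp : p ∈ Z <;> by_cases hq : q ∈ Z <;> simp only [hp, hq, if_true, if_false]
  · linarith
  · linarith [hslack Z k hk hp hq]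
  · linarith
  · linarith

lemma nonIntegralCoords_transfer_subset [Fintype S] (hp : p ∈ nonIntegralCoords x)
    (hq : q ∈ nonIntegralCoords x) :
    nonIntegralCoords (transfer x p q α) ⊆ nonIntegralCoords x := by
  intro s hs
  by_cases hsp : s = p
  · exact hsp ▸ hp
  by_cases hsq : s = q
  · exact hsq ▸ hq
  simpa [mem_nonIntegralCoords, transfer, hsp, hsq] using hs

lemma looseSets_transfer_subset [Fintype S] (hx : x ∈ submodularPolyhedron b)
    (hsep : ∀ Z, IsTight b x Z → q ∈ Z → p ∈ Z) (hα : 0 ≤ α) :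
    looseSets b (transfer x p q α) ⊆ looseSets b x := by
  intro Z hZ
  obtain ⟨k, hk, hlt⟩ := mem_looseSets.mp hZ
  refine mem_looseSets.mpr ⟨k, hk, (hx Z k hk).lt_of_ne fun htight => ?_⟩
  rw [sum_transfer] at hlt
  by_cases hq : q ∈ Z
  · simp only [hsep Z ⟨k, hk, htight⟩ hq, hq, if_true] at hlt
    linarith
  · by_cases hp : p ∈ Z <;> simp only [hp, hq, if_true, if_false] at hlt <;> linarith

lemma exists_transfer_card_lt [Fintype S] {bS : ℤ} (hx : x ∈ basePolyhedron b bS)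
    (hp : p ∈ nonIntegralCoords x) (hq : q ∈ nonIntegralCoords x) (hpq : p ≠ q)
    (hsep : ∀ Z, IsTight b x Z → (p ∈ Z ↔ q ∈ Z)) :
    ∃ α > 0, transfer x p q α ∈ basePolyhedron b bS ∧ x p + α ≤ ⌈x p⌉ ∧ ⌊x q⌋ ≤ x q - α ∧
      #(nonIntegralCoords (transfer x p q α)) + #(looseSets b (transfer x p q α)) <
        #(nonIntegralCoords x) + #(looseSets b x) := by
  classical
  -- `α` is the largest admissible step: `x p` reaches `⌈x p⌉`, `x q` reaches `⌊x q⌋`, or a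
  -- non-tight set containing `p` but not `q` becomes tight.
  set slack : Finset S → ℝ := fun Z => (((b Z).untopD 0 : ℤ) : ℝ) - ∑ s ∈ Z, x s
  set A : Finset ℝ := insert (⌈x p⌉ - x p) (insert (x q - ⌊x q⌋)
    (((looseSets b x).filter fun Z => p ∈ Z ∧ q ∉ Z).image slack))
  have hA : ∀ a ∈ A, 0 < a := by
    have := floor_lt_and_lt_ceil_of_mem_nonIntegralCoords hp
    have := floor_lt_and_lt_ceil_of_mem_nonIntegralCoords hq
    simp only [A, mem_insert, mem_image, mem_filter, mem_looseSets]
    rintro a (rfl | rfl | ⟨Z, ⟨⟨k, hk, hlt⟩, -⟩, rfl⟩)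
    · linarith
    · linarith
    · simp only [slack, hk, WithTop.untopD_coe]; linarith
  set α := A.min' ⟨_, mem_insert_self _ _⟩
  have hαA : α ∈ A := A.min'_mem _
  have hαle : ∀ a ∈ A, α ≤ a := fun a ha => A.min'_le a ha
  have hαp : x p + α ≤ ⌈x p⌉ := by linarith [hαle _ (mem_insert_self _ _)]
  have hαq : ⌊x q⌋ ≤ x q - α := by
    linarith [hαle _ (mem_insert_of_mem (mem_insert_self _ _))]
  have hαZ : ∀ Z, ∀ k : ℤ, b Z = k → p ∈ Z → q ∉ Z → ∑ s ∈ Z, x s + α ≤ k := by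
    intro Z k hk hpZ hqZ
    have hZ : Z ∈ looseSets b x := mem_looseSets.mpr
      ⟨k, hk, (hx.2 Z k hk).lt_of_ne fun h => hqZ ((hsep Z ⟨k, hk, h⟩).mp hpZ)⟩
    have := hαle (slack Z) (mem_insert_of_mem (mem_insert_of_mem
      (mem_image_of_mem _ (mem_filter.mpr ⟨hZ, hpZ, hqZ⟩))))
    simp only [slack, hk, WithTop.untopD_coe] at this
    linarith
  have hα0 := hA α hαA
  refine ⟨α, hα0, transfer_mem_basePolyhedron hx hα0.le hαZ, hαp, hαq, ?_⟩
  have hN := nonIntegralCoords_transfer_subset (α := α) hp hq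
  have hL := looseSets_transfer_subset (α := α) hx.2 (fun Z hZ => (hsep Z hZ).mpr) hα0.le
  have hNL : nonIntegralCoords (transfer x p q α) ⊂ nonIntegralCoords x ∨
      looseSets b (transfer x p q α) ⊂ looseSets b x := by
    simp only [A, mem_insert, mem_image, mem_filter] at hαA
    rcases hαA with hα | hα | ⟨Z, ⟨hZ, hpZ, hqZ⟩, hα⟩
    · refine .inl (ssubset_of_subset_not_subset hN fun h => mem_nonIntegralCoords.mp (h hp) ?_)
      exact ⟨⌈x p⌉, by rw [transfer_apply_left hpq, hα]; ring⟩
    · refine .inl (ssubset_of_subset_not_subset hN fun h => mem_nonIntegralCoords.mp (h hq) ?_)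
      exact ⟨⌊x q⌋, by rw [transfer_apply_right hpq, hα]; ring⟩
    · refine .inr (ssubset_of_subset_not_subset hL fun h => ?_)
      obtain ⟨k, hk, hlt⟩ := mem_looseSets.mp (h hZ)
      simp only [sum_transfer, hpZ, hqZ, if_true, if_false, ← hα, slack, hk,
        WithTop.untopD_coe] at hlt
      linarith
  have := card_le_card hN
  have := card_le_card hL
  rcases hNL with h | h <;> have := card_lt_card h <;> omega

lemma transfer_mem_box {lo hi : S → ℤ} (hbox : ∀ s, (lo s : ℝ) ≤ x s ∧ x s ≤ hi s) (hpq : p ≠ q)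
    (hα : 0 ≤ α) (hαp : x p + α ≤ ⌈x p⌉) (hαq : ⌊x q⌋ ≤ x q - α) (s : S) :
    (lo s : ℝ) ≤ transfer x p q α s ∧ transfer x p q α s ≤ hi s := by
  by_cases hsp : s = p
  · subst hsp
    have : (⌈x s⌉ : ℝ) ≤ hi s := by exact_mod_cast Int.ceil_le.mpr (hbox s).2
    rw [transfer_apply_left hpq]
    constructor <;> linarith [hbox s]
  by_cases hsq : s = q
  · subst hsq
    have : (lo s : ℝ) ≤ ⌊x s⌋ := by exact_mod_cast Int.le_floor.mpr (hbox s).1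
    rw [transfer_apply_right hpq]
    constructor <;> linarith [hbox s]
  simpa [transfer, hsp, hsq] using hbox s

end Transfer

theorem exists_intCast_mem_basePolyhedron_sum_mul_le [Fintype S] [DecidableEq S]
    (hsub : ∀ X Y, b (X ∩ Y) + b (X ∪ Y) ≤ b X + b Y) {bS : ℤ} (hbS : b univ = bS)
    (c : S → ℝ) {lo hi : S → ℤ} (hx : x ∈ basePolyhedron b bS)
    (hbox : ∀ s, (lo s : ℝ) ≤ x s ∧ x s ≤ hi s) :
    ∃ m : S → ℤ, (fun s => (m s : ℝ)) ∈ basePolyhedron b bS ∧ (∀ s, lo s ≤ m s ∧ m s ≤ hi s) ∧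
      ∑ s, c s * m s ≤ ∑ s, c s * x s := by
  induction hμ : #(nonIntegralCoords x) + #(looseSets b x) using Nat.strong_induction_on
    generalizing x with
  | _ n ih =>
  rcases (nonIntegralCoords x).eq_empty_or_nonempty with hN | hN
  · have hint (s : S) : ∃ k : ℤ, (k : ℝ) = x s := by
      by_contra h
      exact (eq_empty_iff_forall_notMem.mp hN) s (mem_nonIntegralCoords.mpr h)
    choose m hm using hint
    obtain rfl : (fun s => (m s : ℝ)) = x := funext hm
    exact ⟨m, hx, fun s => by simpa using hbox s, le_rfl⟩
  obtain ⟨p, hp, q, hq, hpq, hsep⟩ := exists_inseparable_nonIntegralCoords hsub hbS hx hN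
  wlog hc : c p ≤ c q generalizing p q
  · exact this q hq p hp hpq.symm (fun Z hZ => (hsep Z hZ).symm) (le_of_not_ge hc)
  obtain ⟨α, hα, hy, hαp, hαq, hlt⟩ := exists_transfer_card_lt hx hp hq hpq hsep
  obtain ⟨m, hm, hmbox, hcost⟩ :=
    ih _ (hμ ▸ hlt) hy (transfer_mem_box hbox hpq hα.le hαp hαq) rfl
  refine ⟨m, hm, hmbox, hcost.trans ?_⟩
  rw [sum_mul_transfer]
  nlinarith

end BasePolyhedron

theorem squareSum_proximity_of_piecewiseLinear_minimizer_general
    {S : Type*} [Fintype S] [DecidableEq S]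
    (b : Finset S → WithTop ℤ)
    (hsub : ∀ X Y : Finset S, b (X ∩ Y) + b (X ∪ Y) ≤ b X + b Y)
    (bS : ℤ) (hbS : b Finset.univ = (bS : WithTop ℤ))
    (B : Set (S → ℝ))
    (hB : B = {x : S → ℝ | (∑ s : S, x s) = (bS : ℝ) ∧
      ∀ Z : Finset S, ∀ m : ℤ, b Z = (m : WithTop ℤ) → ∑ s ∈ Z, x s ≤ (m : ℝ)})
    (mbar : S → ℝ) (hmbar : mbar ∈ B)
    (hmin : ∀ x ∈ B, ∑ s : S, phibar (mbar s) ≤ ∑ s : S, phibar (x s)) :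
    ∃ m : S → ℤ, (fun s => (m s : ℝ)) ∈ B ∧
      (∀ z : S → ℤ, (fun s => (z s : ℝ)) ∈ B →
        ∑ s : S, (m s) ^ 2 ≤ ∑ s : S, (z s) ^ 2) ∧
      ∀ s : S, ⌊mbar s⌋ ≤ m s ∧ m s ≤ ⌈mbar s⌉ := by
  subst hB
  set c : S → ℝ := fun s => 2 * ⌊mbar s⌋ + 1
  have hphibar (x : S → ℝ) (hx : ∀ s, (⌊mbar s⌋ : ℝ) ≤ x s ∧ x s ≤ ⌈mbar s⌉) :
      ∑ s, phibar (x s) = ∑ s, c s * x s - ∑ s, (⌊mbar s⌋ : ℝ) * (⌊mbar s⌋ + 1) := by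
    rw [← sum_sub_distrib]
    exact sum_congr rfl fun s _ => phibar_eq_of_floor_le_of_le_ceil (hx s).1 (hx s).2
  obtain ⟨m, hm, hbox, hcost⟩ := exists_intCast_mem_basePolyhedron_sum_mul_le hsub hbS c hmbar
    fun s => ⟨Int.floor_le _, Int.le_ceil _⟩
  refine ⟨m, hm, fun z hz => ?_, hbox⟩
  have : ∑ s, phibar (m s) ≤ ∑ s, phibar (z s) := calc
    ∑ s, phibar (m s) ≤ ∑ s, phibar (mbar s) := by
      rw [hphibar _ fun s => by exact_mod_cast hbox s,
        hphibar _ fun s => ⟨Int.floor_le _, Int.le_ceil _⟩]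
      linarith
    _ ≤ ∑ s, phibar (z s) := hmin _ hz
  simpa only [phibar_intCast, ← Int.cast_pow, ← Int.cast_sum, Int.cast_le] using this

theorem squareSum_proximity_of_piecewiseLinear_minimizer
    {S : Type*} [Fintype S] [DecidableEq S]
    (b : Finset S → WithTop ℤ)
    (hsub : ∀ X Y : Finset S, b (X ∩ Y) + b (X ∪ Y) ≤ b X + b Y)
    (bS : ℤ) (hbS : b Finset.univ = (bS : WithTop ℤ))
    (B : Set (S → ℝ))
    (hB : B = {x : S → ℝ | (∑ s : S, x s) = (bS : ℝ) ∧
      ∀ Z : Finset S, ∀ m : ℤ, b Z = (m : WithTop ℤ) → ∑ s ∈ Z, x s ≤ (m : ℝ)})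
    (hne : B.Nonempty)
    (mbar : S → ℝ) (hmbar : mbar ∈ B)
    (hmin : ∀ x ∈ B, ∑ s : S, phibar (mbar s) ≤ ∑ s : S, phibar (x s)) :
    ∃ m : S → ℤ, (fun s => (m s : ℝ)) ∈ B ∧
      (∀ z : S → ℤ, (fun s => (z s : ℝ)) ∈ B →
        ∑ s : S, (m s) ^ 2 ≤ ∑ s : S, (z s) ^ 2) ∧
      ∀ s : S, ⌊mbar s⌋ ≤ m s ∧ m s ≤ ⌈mbar s⌉ :=
  squareSum_proximity_of_piecewiseLinear_minimizer_general b hsub bS hbS B hB mbar hmbar hmin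
end
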